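/- arXiv:1806.02735 — 2 statements merged into one kernel-verified Lean document; each statement's English description precedes it below -/
import Mathlib

section
/- Let n ≥ 3 be an integer and p a prime with p ≡ 1 (mod n), and set m = (p−1)/n. Then (p−1)!/(m!)^n ≡ −Γ_p(1/n)^n (mod p), where Γ_p is the p-adic Gamma function. -/
/-!
Reduced mod `p`, `Γ_p(k) = ∏_{i < k} -(if p ∣ i then 1 else i)` is a product along a `p`-periodic
sequence. Splitting off the last `m` factors of `Γ_p(p)` and reflecting `i ↦ p - i` gives
`Γ_p(p - m) · m! ≡ Γ_p(p)`; for `m = p - 1` Wilson's theorem turns this into `Γ_p(p) ≡ 1`, so one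
full period contributes `1` and `Γ_p` mod `p` depends only on `k mod p`. As `n (p - m) ≡ 1 (mod p)`,
continuity of `Γ_p` and density of `ℕ` in `ℤ_p` then give `Γ_p(1/n) ≡ Γ_p(p - m) ≡ 1/m!`, and
Wilson's theorem once more gives `(p-1)!/(m!)^n ≡ -1/(m!)^n ≡ -Γ_p(1/n)^n`.
-/

/-- `Γ_p(n) = (−1)^n ∏_{1 ≤ k < n, p ∤ k} k` on the natural numbers. -/
def gammaPNat (p n : ℕ) : ℤ :=
  (-1) ^ n * ∏ k ∈ (Finset.Ico 1 n).filter (fun k => ¬ p ∣ k), (k : ℤ)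

open Finset
open scoped Nat

theorem Function.Periodic.prod_range_mul_add {M : Type*} [CommMonoid M] {f : ℕ → M} {c : ℕ}
    (hf : Function.Periodic f c) (t a : ℕ) :
    ∏ i ∈ range (c * t + a), f i = (∏ i ∈ range c, f i) ^ t * ∏ i ∈ range a, f i := by
  induction t with
  | zero => simp
  | succ t ih =>
    rw [show c * (t + 1) + a = c + (c * t + a) by ring, prod_range_add, pow_succ', mul_assoc, ← ih]
    congr 1
    exact prod_congr rfl fun i _ => by rw [add_comm, hf]

theorem Nat.lt_of_sub_one_eq_mul {p m n : ℕ} (hp : 1 < p) (h : p - 1 = m * n) : m < p := by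
  have hn : n ≠ 0 := by
    rintro rfl
    omega
  have := Nat.le_mul_of_pos_right m (Nat.pos_of_ne_zero hn)
  omega

theorem IsUltrametricDist.norm_sub_lt_of_norm_sub_lt {E : Type*} [SeminormedAddCommGroup E]
    [IsUltrametricDist E] {a b c : E} {r : ℝ} (hab : ‖a - b‖ < r) (hbc : ‖b - c‖ < r) :
    ‖a - c‖ < r := by
  rw [← dist_eq_norm] at hab hbc ⊢
  exact (dist_triangle_max a b c).trans_lt (max_lt hab hbc)

namespace Padic

variable {p : ℕ} [Fact p.Prime]

theorem norm_intCast_sub_lt_one_iff {a b : ℤ} : ‖(a : ℚ_[p]) - b‖ < 1 ↔ (a : ZMod p) = b := by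
  rw [← Int.cast_sub, norm_intCast_lt_one_iff, ZMod.intCast_eq_intCast_iff_dvd_sub, dvd_sub_comm]

theorem norm_natCast_sub_lt_one_iff {a b : ℕ} : ‖(a : ℚ_[p]) - b‖ < 1 ↔ a ≡ b [MOD p] := by
  rw [← ZMod.natCast_eq_natCast_iff]
  exact_mod_cast norm_intCast_sub_lt_one_iff (a := a) (b := b)

theorem norm_le_one_of_norm_sub_lt_one {x y : ℚ_[p]} (hy : ‖y‖ ≤ 1) (h : ‖x - y‖ < 1) :
    ‖x‖ ≤ 1 := by
  simpa using (nonarchimedean (x - y) y).trans (max_le h.le hy)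

theorem norm_pow_sub_pow_lt_one {x y : ℚ_[p]} (hy : ‖y‖ ≤ 1) (h : ‖x - y‖ < 1) (n : ℕ) :
    ‖x ^ n - y ^ n‖ < 1 := by
  set a : ℤ_[p] := ⟨x, norm_le_one_of_norm_sub_lt_one hy h⟩
  set b : ℤ_[p] := ⟨y, hy⟩
  obtain ⟨c, hc⟩ := sub_dvd_pow_sub_pow a b n
  calc ‖x ^ n - y ^ n‖ = ‖a ^ n - b ^ n‖ := rfl
    _ = ‖x - y‖ * ‖c‖ := by rw [hc, norm_mul]; rfl
    _ ≤ ‖x - y‖ * 1 := by gcongr; exact c.norm_le_one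
    _ < 1 := by rwa [mul_one]

end Padic

theorem gammaPNat_eq_prod_range (p k : ℕ) :
    gammaPNat p k = ∏ i ∈ range k, -(if p ∣ i then 1 else (i : ℤ)) := by
  have hzero : ∀ i ∈ range k, i ∉ Ico 1 k → (if p ∣ i then 1 else (i : ℤ)) = 1 := by
    intro i hi hi'
    obtain rfl : i = 0 := by simp_all
    simp
  rw [gammaPNat, prod_neg, card_range, prod_filter,
    ← prod_subset (by rw [range_eq_Ico]; exact Ico_subset_Ico_left zero_le_one) hzero]
  simp only [ite_not]

def gammaPFactor (p i : ℕ) : ZMod p := -(if p ∣ i then 1 else (i : ZMod p))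

theorem gammaPFactor_periodic (p : ℕ) : Function.Periodic (gammaPFactor p) p := by
  intro i
  simp [gammaPFactor]

theorem gammaPNat_cast_eq_prod_range (p k : ℕ) :
    (gammaPNat p k : ZMod p) = ∏ i ∈ range k, gammaPFactor p i := by
  rw [gammaPNat_eq_prod_range]
  push_cast
  rfl

section GammaModP

variable {p : ℕ} [Fact p.Prime]

theorem gammaPNat_cast_sub_mul_factorial {m : ℕ} (hm : m < p) :
    (gammaPNat p (p - m) : ZMod p) * m ! = gammaPNat p p := by
  have hsplit := prod_range_add (gammaPFactor p) (p - m) m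
  rw [Nat.sub_add_cancel hm.le] at hsplit
  rw [gammaPNat_cast_eq_prod_range, gammaPNat_cast_eq_prod_range, hsplit,
    ← prod_range_add_one_eq_factorial, Nat.cast_prod]
  congr 1
  rw [← prod_range_reflect]
  refine prod_congr rfl fun j hj => ?_
  have hj : j < m := mem_range.1 hj
  have hndvd : ¬ p ∣ p - m + j := Nat.not_dvd_of_pos_of_lt (by omega) (by omega)
  have hsum : ((p - m + j : ℕ) : ZMod p) + ((m - 1 - j + 1 : ℕ) : ZMod p) = 0 := by
    rw [← Nat.cast_add, show p - m + j + (m - 1 - j + 1) = p by omega, ZMod.natCast_self]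
  rw [gammaPFactor, if_neg hndvd]
  linear_combination hsum

theorem gammaPNat_cast_self : (gammaPNat p p : ZMod p) = 1 := by
  have hp := (Fact.out : p.Prime).pos
  have h := gammaPNat_cast_sub_mul_factorial (p := p) (m := p - 1) (by omega)
  have hone : gammaPNat p 1 = -1 := by simp [gammaPNat]
  rw [ZMod.wilsons_lemma, Nat.sub_sub_self hp, hone] at h
  simpa using h.symm

theorem gammaPNat_cast_mul_add (t a : ℕ) :
    (gammaPNat p (p * t + a) : ZMod p) = gammaPNat p a := by
  rw [gammaPNat_cast_eq_prod_range, (gammaPFactor_periodic p).prod_range_mul_add,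
    ← gammaPNat_cast_eq_prod_range, gammaPNat_cast_self, one_pow, one_mul,
    gammaPNat_cast_eq_prod_range]

theorem gammaPNat_cast_eq_of_modEq {k l : ℕ} (h : k ≡ l [MOD p]) :
    (gammaPNat p k : ZMod p) = gammaPNat p l := by
  have hmod (k : ℕ) : (gammaPNat p k : ZMod p) = gammaPNat p (k % p) := by
    conv_lhs => rw [← Nat.div_add_mod k p]
    exact gammaPNat_cast_mul_add _ _
  rw [hmod k, hmod l, h]

end GammaModP

section PadicGamma

variable {p : ℕ} [Fact p.Prime]

theorem norm_sub_gammaPNat_lt_one {Γ : ℚ_[p] → ℚ_[p]}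
    (hΓcont : ContinuousOn Γ {y : ℚ_[p] | ‖y‖ ≤ 1})
    (hΓnat : ∀ k : ℕ, Γ (k : ℚ_[p]) = (gammaPNat p k : ℚ_[p]))
    {x : ℚ_[p]} {N : ℕ} (hxN : ‖x - N‖ < 1) :
    ‖Γ x - gammaPNat p N‖ < 1 := by
  have hx : ‖x‖ ≤ 1 :=
    Padic.norm_le_one_of_norm_sub_lt_one (by simpa using Padic.norm_int_le_one N) hxN
  obtain ⟨δ, hδ, hΓδ⟩ := Metric.continuousWithinAt_iff.1 (hΓcont x hx) 1 one_pos
  obtain ⟨k, hk⟩ :=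
    PadicInt.denseRange_natCast.exists_dist_lt (⟨x, hx⟩ : ℤ_[p]) (lt_min hδ one_pos)
  have hkx : ‖(k : ℚ_[p]) - x‖ < min δ 1 := by rw [norm_sub_rev]; exact hk
  have hΓk : ‖Γ x - Γ k‖ < 1 := by
    rw [← dist_eq_norm, dist_comm]
    exact hΓδ (by simpa using Padic.norm_int_le_one k)
      (by rw [dist_eq_norm]; exact hkx.trans_le (min_le_left _ _))
  have hkN : k ≡ N [MOD p] := Padic.norm_natCast_sub_lt_one_iff.1 <|
    IsUltrametricDist.norm_sub_lt_of_norm_sub_lt (hkx.trans_le (min_le_right _ _)) hxN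
  have hΓkN : ‖Γ k - gammaPNat p N‖ < 1 := by
    rw [hΓnat, Padic.norm_intCast_sub_lt_one_iff, gammaPNat_cast_eq_of_modEq hkN]
  exact IsUltrametricDist.norm_sub_lt_of_norm_sub_lt hΓk hΓkN

theorem norm_inv_natCast_sub_lt_one {n m : ℕ} (hm : p - 1 = m * n) :
    ‖(n : ℚ_[p])⁻¹ - (p - m : ℕ)‖ < 1 := by
  have hp := (Fact.out : p.Prime)
  have hmp : m < p := Nat.lt_of_sub_one_eq_mul hp.one_lt hm
  have hmn : (m * n : ZMod p) = -1 := by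
    have := congrArg (Nat.cast : ℕ → ZMod p) hm
    push_cast [Nat.cast_sub hp.one_le, ZMod.natCast_self] at this
    simpa using this.symm
  have hn : ‖(n : ℚ_[p])‖ = 1 := by
    rw [Padic.norm_natCast_eq_one_iff, hp.coprime_iff_not_dvd, ← ZMod.natCast_eq_zero_iff]
    intro h0
    simp [h0] at hmn
  have hn0 : (n : ℚ_[p]) ≠ 0 := by
    rintro h0
    simp [h0] at hn
  calc ‖(n : ℚ_[p])⁻¹ - (p - m : ℕ)‖ = ‖((1 : ℤ) : ℚ_[p]) - ((n * (p - m) : ℕ) : ℤ)‖ := by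
        rw [← one_mul ‖_ - _‖, ← hn, ← norm_mul, mul_sub, mul_inv_cancel₀ hn0]
        push_cast
        rfl
    _ < 1 := Padic.norm_intCast_sub_lt_one_iff.2 (by
        push_cast [Nat.cast_sub hmp.le, ZMod.natCast_self]
        linear_combination hmn)

theorem norm_factorial_div_sub_neg_gammaPNat_pow_lt_one {m : ℕ} (hm : m < p) (n : ℕ) :
    ‖((p - 1)! : ℚ_[p]) / (m ! : ℚ_[p]) ^ n - -(gammaPNat p (p - m) : ℚ_[p]) ^ n‖ < 1 := by
  have hp := (Fact.out : p.Prime)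
  have hM : ‖(m ! : ℚ_[p])‖ = 1 :=
    Padic.norm_natCast_eq_one_iff.2 (hp.coprime_iff_not_dvd.2 (by rw [hp.dvd_factorial]; omega))
  have hM0 : (m ! : ℚ_[p]) ≠ 0 := Nat.cast_ne_zero.2 (Nat.factorial_ne_zero m)
  set z : ℤ := (p - 1)! + gammaPNat p (p - m) ^ n * m ! ^ n
  have hz : ‖(z : ℚ_[p])‖ < 1 := by
    rw [Padic.norm_intCast_lt_one_iff, ← ZMod.intCast_zmod_eq_zero_iff_dvd]
    push_cast [z]
    rw [ZMod.wilsons_lemma, ← mul_pow, gammaPNat_cast_sub_mul_factorial hm, gammaPNat_cast_self,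
      one_pow, neg_add_cancel]
  calc _ = ‖(z : ℚ_[p])‖ / ‖(m ! : ℚ_[p])‖ ^ n := by
        rw [← norm_pow, ← norm_div]
        congr 1
        field_simp
        push_cast [z]
        ring
    _ < 1 := by rwa [hM, one_pow, div_one]

end PadicGamma

theorem factorial_ratio_padic_gamma_general (n p m : ℕ) [Fact p.Prime]
    (hm : p - 1 = m * n)
    (Γ : ℚ_[p] → ℚ_[p])
    (hΓcont : ContinuousOn Γ {y : ℚ_[p] | ‖y‖ ≤ 1})
    (hΓnat : ∀ k : ℕ, Γ (k : ℚ_[p]) = (gammaPNat p k : ℚ_[p])) :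
    ‖(Nat.factorial (p - 1) : ℚ_[p]) / (Nat.factorial m : ℚ_[p]) ^ n -
        (-(Γ ((n : ℚ_[p])⁻¹) ^ n))‖ ≤ (p : ℝ) ^ (-1 : ℤ) := by
  have hΓ : ‖Γ (n : ℚ_[p])⁻¹ - gammaPNat p (p - m)‖ < 1 :=
    norm_sub_gammaPNat_lt_one hΓcont hΓnat (norm_inv_natCast_sub_lt_one hm)
  have hΓpow := Padic.norm_pow_sub_pow_lt_one (Padic.norm_int_le_one _) hΓ n
  have hfactorial := norm_factorial_div_sub_neg_gammaPNat_pow_lt_one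
    (Nat.lt_of_sub_one_eq_mul (Fact.out : p.Prime).one_lt hm) n
  rw [Padic.norm_le_pow_iff_norm_lt_pow_add_one, neg_add_cancel, zpow_zero]
  rw [← neg_sub_neg] at hΓpow
  exact IsUltrametricDist.norm_sub_lt_of_norm_sub_lt hfactorial hΓpow

/-- `(p−1)!/(m!)^n ≡ −Γ_p(1/n)^n (mod p)` in `ℤ_p`, where
`m = (p−1)/n` and `Γ` is the Morita `p`-adic Gamma function, characterized as the
continuous function on the unit ball of `ℚ_p` interpolating `gammaPNat p`. -/
theorem factorial_ratio_padic_gamma (n p m : ℕ) [Fact p.Prime]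
    (hn : 3 ≤ n) (hpn : p ≡ 1 [MOD n]) (hm : p - 1 = m * n)
    (Γ : ℚ_[p] → ℚ_[p])
    (hΓcont : ContinuousOn Γ {y : ℚ_[p] | ‖y‖ ≤ 1})
    (hΓnat : ∀ k : ℕ, Γ (k : ℚ_[p]) = (gammaPNat p k : ℚ_[p])) :
    ‖(Nat.factorial (p - 1) : ℚ_[p]) / (Nat.factorial m : ℚ_[p]) ^ n -
        (-(Γ ((n : ℚ_[p])⁻¹) ^ n))‖ ≤ (p : ℝ) ^ (-1 : ℤ) :=
  factorial_ratio_padic_gamma_general n p m hm Γ hΓcont hΓnat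
end

section
/- Let n ≥ 3 be an integer and p > 3 a prime with p ≡ 1 (mod n), and set m = (p−1)/n. Then ∑_{k=0}^{p−1−m} C(m+k, m)^n · (∑_{i=1}^{k+m} 1/i − ∑_{i=1}^{k} 1/i) · ∑_{i=1}^{k+m} 1/i ≡ 0 (mod p), as a congruence of p-integral rationals. -/
/-!
Over `𝔽_p` let `f = (X + 1)(X + 2)⋯(X + m)`, so that `f(k) = m! C(m+k, m)` and
`f'(k) / f(k) = H_{k+m} - H_k`. The polynomial `f^{n-2} f'^2` has degree `nm - 2 < p - 1`, so its
values over `𝔽_p` sum to `0`; it vanishes at `p - m ≤ k < p`, whence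
`T := ∑_k C(m+k, m)^n (H_{k+m} - H_k)^2 ≡ 0`. The involution `k ↦ p - 1 - m - k` fixes
`C(m+k, m)^n` (since `C(p-1-k, m) ≡ (-1)^m C(m+k, m)` and `mn = p - 1` is even) and swaps `H_k`
with `H_{k+m}` (since `H_{p-1-j} ≡ H_j`), so it turns the sum `S` of the theorem into `T - S`,
and `2S ≡ 0`. The passage from `ℚ` to `𝔽_p` goes through `ℤ_[p]`, where every denominator
`0 < i < p` is a unit.
-/

open Finset Polynomial
open scoped Nat

/-- Non-invertible denominators contribute `0`, so this is `H_k` only while `1, …, k` are units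
of `R`. -/
noncomputable def harmonicIn (R : Type*) [Semiring R] (k : ℕ) : R :=
  ∑ i ∈ range k, Ring.inverse ((i + 1 : ℕ) : R)

noncomputable def harmonicProductSum (R : Type*) [CommRing R] (N m n : ℕ) : R :=
  ∑ k ∈ range N, ((m + k).choose m : R) ^ n *
    (harmonicIn R (k + m) - harmonicIn R k) * harmonicIn R (k + m)

noncomputable def ascFactorialPoly (R : Type*) [CommSemiring R] (m : ℕ) : R[X] :=
  ∏ l ∈ range m, (X + C ((l + 1 : ℕ) : R))

section MapRingHom

variable {R S : Type*}

theorem RingHom.map_ringInverse_of_isUnit [Semiring R] [Semiring S] (f : R →+* S) {x : R}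
    (hx : IsUnit x) : f (Ring.inverse x) = Ring.inverse (f x) := by
  obtain ⟨u, rfl⟩ := hx
  have h := Ring.inverse_unit (Units.map (f : R →* S) u)
  rw [Units.coe_map, Units.coe_map_inv, MonoidHom.coe_coe] at h
  rw [Ring.inverse_unit, h]

theorem map_harmonicIn [Semiring R] [Semiring S] (f : R →+* S) {k : ℕ}
    (h : ∀ j, 0 < j → j ≤ k → IsUnit (j : R)) : f (harmonicIn R k) = harmonicIn S k := by
  simp only [harmonicIn, map_sum]
  refine sum_congr rfl fun i hi => ?_
  rw [f.map_ringInverse_of_isUnit (h _ i.succ_pos (mem_range.1 hi)), map_natCast]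

theorem map_harmonicProductSum [CommRing R] [CommRing S] (f : R →+* S) {N m n : ℕ}
    (h : ∀ j, 0 < j → j < N + m → IsUnit (j : R)) :
    f (harmonicProductSum R N m n) = harmonicProductSum S N m n := by
  simp only [harmonicProductSum, map_sum, map_mul, map_sub, map_pow, map_natCast]
  refine sum_congr rfl fun k hk => ?_
  have hk := mem_range.1 hk
  rw [map_harmonicIn f fun j hj _ => h j hj (by omega),
    map_harmonicIn f fun j hj _ => h j hj (by omega)]

end MapRingHom

theorem harmonicIn_add_sub {R : Type*} [Ring R] (k m : ℕ) :
    harmonicIn R (k + m) - harmonicIn R k =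
      ∑ j ∈ range m, Ring.inverse ((k + j + 1 : ℕ) : R) := by
  rw [harmonicIn, harmonicIn, sum_range_add, add_sub_cancel_left]

theorem harmonicIn_rat (k : ℕ) : harmonicIn ℚ k = ∑ i ∈ Icc 1 k, (1 : ℚ) / i := by
  simp [harmonicIn, ← harmonic_eq_sum_Icc, harmonic]

theorem ascFactorialPoly_eval_natCast {R : Type*} [CommSemiring R] (m k : ℕ) :
    (ascFactorialPoly R m).eval (k : R) = ((k + 1).ascFactorial m : R) := by
  simp only [ascFactorialPoly, eval_prod, eval_add, eval_X, eval_C, Nat.ascFactorial_eq_prod_range]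
  push_cast
  exact prod_congr rfl fun _ _ => by ring

theorem ascFactorialPoly_natDegree {R : Type*} [CommSemiring R] [Nontrivial R] (m : ℕ) :
    (ascFactorialPoly R m).natDegree = m := by
  simp only [ascFactorialPoly, natDegree_prod_of_monic _ _ fun _ _ => monic_X_add_C _,
    natDegree_X_add_C, sum_const, card_range, smul_eq_mul, mul_one]

theorem eval_derivative_prod_X_add_C {ι K : Type*} [DecidableEq ι] [Field K] (s : Finset ι)
    (a : ι → K) {x : K} (h : ∀ i ∈ s, x + a i ≠ 0) :
    (derivative (∏ i ∈ s, (X + C (a i)))).eval x =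
      (∏ i ∈ s, (X + C (a i))).eval x * ∑ i ∈ s, (x + a i)⁻¹ := by
  simp only [derivative_prod_finset, derivative_add, derivative_X, derivative_C, add_zero,
    mul_one, eval_finsetSum, eval_prod, eval_add, eval_X, eval_C, mul_sum]
  refine sum_congr rfl fun i hi => ?_
  rw [← mul_prod_erase s _ hi, mul_comm (x + a i), mul_assoc, mul_inv_cancel₀ (h i hi), mul_one]

theorem FiniteField.sum_eval_eq_zero {K : Type*} [Field K] [Fintype K] {P : K[X]}
    (h : P.natDegree < Fintype.card K - 1) : ∑ x, P.eval x = 0 := by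
  simp_rw [eval_eq_sum_range, sum_comm (s := univ), ← mul_sum]
  exact sum_eq_zero fun i hi =>
    by rw [sum_pow_lt_card_sub_one K i (by have := mem_range.1 hi; omega), mul_zero]

theorem ZMod.sum_range_natCast {M : Type*} [AddCommMonoid M] (n : ℕ) [NeZero n]
    (f : ZMod n → M) : ∑ k ∈ range n, f k = ∑ x, f x :=
  sum_nbij' (↑) ZMod.val (fun _ _ => mem_univ _) (fun x _ => mem_range.2 x.val_lt)
    (fun _ hk => ZMod.val_cast_of_lt (mem_range.1 hk)) (fun x _ => ZMod.natCast_zmod_val x)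
    (fun _ _ => rfl)

theorem ZMod.natCast_eq_neg_of_add_eq {p a b : ℕ} (h : a + b = p) : (a : ZMod p) = -b :=
  eq_neg_of_add_eq_zero_left (by rw [← Nat.cast_add, h, ZMod.natCast_self])

theorem PadicInt.norm_coe_le_inv_of_toZMod_eq_zero {p : ℕ} [Fact p.Prime] {x : ℤ_[p]}
    (hx : PadicInt.toZMod x = 0) : ‖(x : ℚ_[p])‖ ≤ (p : ℝ) ^ (-1 : ℤ) := by
  have hmax : x ∈ IsLocalRing.maximalIdeal ℤ_[p] := by rwa [← PadicInt.ker_toZMod]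
  rw [← PadicInt.norm_def, PadicInt.norm_le_pow_iff_norm_lt_pow_add_one]
  simpa using PadicInt.mem_nonunits.1 hmax

section ZModPrime

variable {p : ℕ} [Fact p.Prime]

theorem ZMod.two_ne_zero_of_ne_two (hp : p ≠ 2) : (2 : ZMod p) ≠ 0 :=
  Ring.two_ne_zero (by rwa [ZMod.ringChar_zmod_n])

theorem ZMod.natCast_factorial_ne_zero {m : ℕ} (hm : m < p) : (m ! : ZMod p) ≠ 0 := by
  rw [Ne, ZMod.natCast_eq_zero_iff, (Fact.out : p.Prime).dvd_factorial]
  omega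

theorem harmonicIn_zmod_sub_one_sub_eq_add {k : ℕ} (hk : k ≤ p - 1) :
    harmonicIn (ZMod p) (p - 1 - k) = harmonicIn (ZMod p) (p - 1) + harmonicIn (ZMod p) k := by
  have h := harmonicIn_add_sub (R := ZMod p) (p - 1 - k) k
  rw [Nat.sub_add_cancel hk] at h
  have hrefl : ∑ j ∈ range k, Ring.inverse ((p - 1 - k + j + 1 : ℕ) : ZMod p) =
      -harmonicIn (ZMod p) k := by
    rw [harmonicIn, ← sum_range_reflect (fun i ↦ Ring.inverse ((i + 1 : ℕ) : ZMod p)) k,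
      ← sum_neg_distrib]
    refine sum_congr rfl fun j hj => ?_
    have hj := mem_range.1 hj
    rw [Ring.inverse_eq_inv', ZMod.natCast_eq_neg_of_add_eq (b := k - 1 - j + 1) (by omega),
      inv_neg]
  linear_combination -h - hrefl

theorem harmonicIn_zmod_sub_one (hp : p ≠ 2) : harmonicIn (ZMod p) (p - 1) = 0 := by
  have h := harmonicIn_zmod_sub_one_sub_eq_add (p := p) le_rfl
  have h0 : harmonicIn (ZMod p) 0 = 0 := sum_range_zero _
  rw [Nat.sub_self, h0, ← two_mul] at h
  exact (mul_eq_zero.1 h.symm).resolve_left (ZMod.two_ne_zero_of_ne_two hp)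

theorem harmonicIn_zmod_sub_one_sub (hp : p ≠ 2) {k : ℕ} (hk : k ≤ p - 1) :
    harmonicIn (ZMod p) (p - 1 - k) = harmonicIn (ZMod p) k := by
  rw [harmonicIn_zmod_sub_one_sub_eq_add hk, harmonicIn_zmod_sub_one hp, zero_add]

theorem ZMod.choose_sub_one_sub {k m : ℕ} (hkm : k + m ≤ p - 1) :
    ((p - 1 - k).choose m : ZMod p) = (-1) ^ m * ((m + k).choose m : ZMod p) := by
  have := (Fact.out : p.Prime).two_le
  refine mul_left_cancel₀ (ZMod.natCast_factorial_ne_zero (p := p) (m := m) (by omega)) ?_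
  calc (m ! : ZMod p) * ((p - 1 - k).choose m : ℕ)
      = ∏ i ∈ range m, ((p - 1 - k - i : ℕ) : ZMod p) := by
        rw [← Nat.cast_mul, ← Nat.descFactorial_eq_factorial_mul_choose,
          Nat.descFactorial_eq_prod_range, Nat.cast_prod]
    _ = ∏ i ∈ range m, (-1) * ((k + 1 + i : ℕ) : ZMod p) :=
        prod_congr rfl fun i hi => by
          rw [ZMod.natCast_eq_neg_of_add_eq (b := k + 1 + i) (by have := mem_range.1 hi; omega),
            neg_one_mul]
    _ = (-1) ^ m * (m ! * ((m + k).choose m : ℕ)) := by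
        rw [prod_mul_distrib, prod_const, card_range, ← Nat.cast_prod,
          ← Nat.ascFactorial_eq_prod_range, Nat.ascFactorial_eq_factorial_mul_choose, add_comm m,
          Nat.cast_mul]
    _ = (m ! : ZMod p) * ((-1) ^ m * ((m + k).choose m : ZMod p)) := by ring

theorem ascFactorialPoly_eval_eq_zero {m k : ℕ} (hk : p - m ≤ k) (hkp : k < p) :
    (ascFactorialPoly (ZMod p) m).eval (k : ZMod p) = 0 := by
  rw [ascFactorialPoly_eval_natCast, ZMod.natCast_eq_zero_iff, Nat.ascFactorial_eq_prod_range]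
  simpa [show k + 1 + (p - k - 1) = p by omega] using
    dvd_prod_of_mem (fun i ↦ k + 1 + i) (mem_range.2 (show p - k - 1 < m by omega))

theorem ascFactorialPoly_eval_derivative {m k : ℕ} (hkm : k + m < p) :
    (derivative (ascFactorialPoly (ZMod p) m)).eval (k : ZMod p) =
      m ! * (m + k).choose m * (harmonicIn (ZMod p) (k + m) - harmonicIn (ZMod p) k) := by
  rw [harmonicIn_add_sub, ascFactorialPoly, eval_derivative_prod_X_add_C, ← ascFactorialPoly,
    ascFactorialPoly_eval_natCast, Nat.ascFactorial_eq_factorial_mul_choose, add_comm k]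
  · push_cast
    simp only [Ring.inverse_eq_inv', add_assoc]
  · intro l hl
    have hl := mem_range.1 hl
    rw [← Nat.cast_add, Ne, ZMod.natCast_eq_zero_iff]
    exact Nat.not_dvd_of_pos_of_lt (by omega) (by omega)

theorem sum_choose_pow_mul_harmonicIn_sub_sq_eq_zero {n m : ℕ} (hn : 3 ≤ n)
    (hm : p - 1 = m * n) :
    ∑ k ∈ range (p - m), ((m + k).choose m : ZMod p) ^ n *
      (harmonicIn (ZMod p) (k + m) - harmonicIn (ZMod p) k) ^ 2 = 0 := by
  have hp := (Fact.out : p.Prime).two_le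
  obtain ⟨a, rfl⟩ : ∃ a, n = a + 2 := ⟨n - 2, by omega⟩
  obtain ⟨b, rfl⟩ : ∃ b, m = b + 1 := ⟨m - 1, by rcases m with _ | m <;> omega⟩
  have hmp : b + 1 < p := by
    have := Nat.le_mul_of_pos_right (b + 1) (show 0 < a + 2 by omega)
    omega
  set f := ascFactorialPoly (ZMod p) (b + 1)
  set P := f ^ a * derivative f ^ 2
  have hdeg : P.natDegree < Fintype.card (ZMod p) - 1 := by
    have hf : f.natDegree = b + 1 := ascFactorialPoly_natDegree _
    have hf' : (derivative f).natDegree ≤ b := by simpa [hf] using natDegree_derivative_le f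
    calc P.natDegree ≤ a * (b + 1) + 2 * b :=
          natDegree_mul_le_of_le (natDegree_pow_le_of_le _ hf.le) (natDegree_pow_le_of_le _ hf')
      _ < Fintype.card (ZMod p) - 1 := by rw [ZMod.card, hm]; nlinarith
  have head : ∀ k < p - (b + 1), P.eval (k : ZMod p) = ((b + 1) ! : ZMod p) ^ (a + 2) *
      (((b + 1 + k).choose (b + 1) : ZMod p) ^ (a + 2) *
        (harmonicIn (ZMod p) (k + (b + 1)) - harmonicIn (ZMod p) k) ^ 2) := by
    intro k hk
    rw [eval_mul, eval_pow, eval_pow, ascFactorialPoly_eval_natCast,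
      ascFactorialPoly_eval_derivative (by omega), Nat.ascFactorial_eq_factorial_mul_choose,
      add_comm k]
    push_cast
    ring
  have tail : ∀ k ∈ Ico (p - (b + 1)) p, P.eval (k : ZMod p) = 0 := by
    intro k hk
    have hk := mem_Ico.1 hk
    rw [eval_mul, eval_pow, ascFactorialPoly_eval_eq_zero hk.1 hk.2, zero_pow (by omega),
      zero_mul]
  have hsum := FiniteField.sum_eval_eq_zero hdeg
  rw [← ZMod.sum_range_natCast, ← sum_range_add_sum_Ico _ (Nat.sub_le p (b + 1)),
    sum_eq_zero tail, add_zero, sum_congr rfl fun k hk => head k (mem_range.1 hk),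
    ← mul_sum] at hsum
  exact (mul_eq_zero.1 hsum).resolve_left (pow_ne_zero _ (ZMod.natCast_factorial_ne_zero hmp))

theorem harmonicProductSum_zmod_eq_zero {n m : ℕ} (hn : 3 ≤ n) (hm : p - 1 = m * n) :
    harmonicProductSum (ZMod p) (p - m) m n = 0 := by
  have hp2 : p ≠ 2 := by
    rintro rfl
    have := Nat.le_of_dvd one_pos (Dvd.intro_left m hm.symm)
    omega
  have heven : Even (m * n) :=
    hm ▸ Nat.Odd.sub_odd ((Fact.out : p.Prime).odd_of_ne_two hp2) odd_one
  have h2 : (2 : ZMod p) * harmonicProductSum (ZMod p) (p - m) m n = 0 := by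
    rw [← sum_choose_pow_mul_harmonicIn_sub_sq_eq_zero hn hm, two_mul]
    nth_rewrite 1 [harmonicProductSum, ← sum_range_reflect]
    rw [harmonicProductSum, ← sum_add_distrib]
    refine sum_congr rfl fun k hk => ?_
    have hk := mem_range.1 hk
    rw [show m + (p - m - 1 - k) = p - 1 - k by omega,
      show p - m - 1 - k + m = p - 1 - k by omega,
      show p - m - 1 - k = p - 1 - (k + m) by omega, ZMod.choose_sub_one_sub (by omega),
      harmonicIn_zmod_sub_one_sub hp2 (by omega), harmonicIn_zmod_sub_one_sub hp2 (by omega),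
      mul_pow, ← pow_mul, heven.neg_one_pow, one_mul]
    ring
  exact (mul_eq_zero.1 h2).resolve_left (ZMod.two_ne_zero_of_ne_two hp2)

end ZModPrime

theorem harmonic_product_vanishes_mod_p_general (n p m : ℕ) [Fact p.Prime]
    (hn : 3 ≤ n) (hm : p - 1 = m * n) :
    ‖((∑ k ∈ Finset.range (p - m), (Nat.choose (m + k) m : ℚ) ^ n *
        ((∑ i ∈ Finset.Icc 1 (k + m), (1 : ℚ) / i) - ∑ i ∈ Finset.Icc 1 k, (1 : ℚ) / i) *
        ∑ i ∈ Finset.Icc 1 (k + m), (1 : ℚ) / i : ℚ) : ℚ_[p])‖ ≤ (p : ℝ) ^ (-1 : ℤ) := by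
  have hmp : m ≤ p := by
    have := Nat.le_mul_of_pos_right m (show 0 < n by omega)
    omega
  have hunit : ∀ j, 0 < j → j < p - m + m → IsUnit (j : ℤ_[p]) := fun j hj hjp => by
    rw [PadicInt.isUnit_iff, PadicInt.norm_natCast_eq_one_iff]
    exact (Fact.out : p.Prime).coprime_iff_not_dvd.2 (Nat.not_dvd_of_pos_of_lt hj (by omega))
  simp only [← harmonicIn_rat]
  change ‖((harmonicProductSum ℚ (p - m) m n : ℚ) : ℚ_[p])‖ ≤ _
  rw [← eq_ratCast (Rat.castHom ℚ_[p]),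
    map_harmonicProductSum _ fun j hj _ => (Nat.cast_pos.2 hj).ne'.isUnit,
    ← map_harmonicProductSum PadicInt.Coe.ringHom hunit]
  refine PadicInt.norm_coe_le_inv_of_toZMod_eq_zero ?_
  rw [map_harmonicProductSum PadicInt.toZMod hunit, harmonicProductSum_zmod_eq_zero hn hm]

/-- `∑_{k=0}^{p-1-m} C(m+k,m)^n (∑_{i=1}^{k+m} 1/i − ∑_{i=1}^{k} 1/i) ∑_{i=1}^{k+m} 1/i ≡ 0 (mod p)`. -/
theorem harmonic_product_vanishes_mod_p (n p m : ℕ) [Fact p.Prime]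
    (hn : 3 ≤ n) (hp : 3 < p) (hpn : p ≡ 1 [MOD n]) (hm : p - 1 = m * n) :
    ‖((∑ k ∈ Finset.range (p - m), (Nat.choose (m + k) m : ℚ) ^ n *
        ((∑ i ∈ Finset.Icc 1 (k + m), (1 : ℚ) / i) - ∑ i ∈ Finset.Icc 1 k, (1 : ℚ) / i) *
        ∑ i ∈ Finset.Icc 1 (k + m), (1 : ℚ) / i : ℚ) : ℚ_[p])‖ ≤ (p : ℝ) ^ (-1 : ℤ) :=
  harmonic_product_vanishes_mod_p_general n p m hn hm
end
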